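/- Let U be a split extension of an S-module A by an inverse semigroup S with splitting k : S → U, and let h : E(S) → A be order-preserving with h(e) ∈ A_{α(e)} (i.e., h ∈ C⁰_≤(S¹,A¹)). Then the map k'(s) = i(h(s s⁻¹)) k(s) i(h(s⁻¹ s))⁻¹ is again a splitting of U. -/
import Mathlib


/-- An inverse semigroup: every element has a unique (generalized) inverse. -/
class InverseSemigroup (S : Type*) extends Semigroup S, Inv S where
  mul_inv_mul : ∀ a : S, a * a⁻¹ * a = a
  inv_mul_inv : ∀ a : S, a⁻¹ * a * a⁻¹ = a⁻¹
  inv_unique : ∀ a b : S, a * b * a = a → b * a * b = b → b = a⁻¹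

/-- `e` is an idempotent. -/
def IsIdem {S : Type*} [Mul S] (e : S) : Prop := e * e = e

/-- The natural partial order on an inverse semigroup: `a ≤ b` iff `a = e * b`
for some idempotent `e`. -/
def NatLe {S : Type*} [Mul S] (a b : S) : Prop := ∃ e, IsIdem e ∧ a = e * b

section ISLemmas
variable {S : Type*} [InverseSemigroup S]

lemma mim (a : S) : a * a⁻¹ * a = a := InverseSemigroup.mul_inv_mul a
lemma imi (a : S) : a⁻¹ * a * a⁻¹ = a⁻¹ := InverseSemigroup.inv_mul_inv a
lemma mim' (a : S) : a * (a⁻¹ * a) = a := by rw [← mul_assoc]; exact mim a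
lemma imi' (a : S) : a⁻¹ * (a * a⁻¹) = a⁻¹ := by rw [← mul_assoc]; exact imi a

lemma my_inv_inv (a : S) : a⁻¹⁻¹ = a :=
  (InverseSemigroup.inv_unique a⁻¹ a (imi a) (mim a)).symm

lemma idem_inv {e : S} (he : IsIdem e) : e⁻¹ = e :=
  (InverseSemigroup.inv_unique e e (by rw [he, he]) (by rw [he, he])).symm

lemma idem_cancel {e : S} (he : IsIdem e) (x : S) : e * (e * x) = e * x := by
  rw [← mul_assoc, he]

lemma idem_mul_inv (a : S) : IsIdem (a * a⁻¹) := by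
  show _ = _
  rw [mul_assoc a a⁻¹, ← mul_assoc a⁻¹, imi]

lemma idem_inv_mul (a : S) : IsIdem (a⁻¹ * a) := by
  show _ = _
  rw [mul_assoc a⁻¹ a, ← mul_assoc a, mim]

lemma idem_mul {e f : S} (he : IsIdem e) (hf : IsIdem f) : IsIdem (e * f) := by
  have key : f * (e * f)⁻¹ * e = (e * f)⁻¹ := by
    apply InverseSemigroup.inv_unique
    · have h1 := mim (e * f)
      simp only [mul_assoc] at h1 ⊢
      rw [idem_cancel hf, idem_cancel he]
      exact h1
    · have h2 := imi (e * f)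
      simp only [mul_assoc] at h2 ⊢
      rw [idem_cancel he, idem_cancel hf]
      simpa [mul_assoc] using congrArg (fun z => f * (z * e)) h2
  have hxidem : IsIdem ((e * f)⁻¹) := by
    show _ = _
    conv_lhs => rw [← key]
    have h2 := imi (e * f)
    simp only [mul_assoc] at h2 ⊢
    -- goal: f * ((e*f)⁻¹ * (e * (f * ((e*f)⁻¹ * e)))) = (e*f)⁻¹
    rw [show (e : S) * (f * ((e*f)⁻¹ * e)) = (e * f) * ((e*f)⁻¹ * e) by rw [mul_assoc]]
    rw [show ((e*f)⁻¹ : S) * ((e * f) * ((e*f)⁻¹ * e)) = ((e*f)⁻¹ * (e * f) * (e*f)⁻¹) * e by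
      simp [mul_assoc]]
    rw [imi]
    rw [← mul_assoc]
    exact key
  have : (e * f)⁻¹⁻¹ = e * f := my_inv_inv _
  rw [← this, idem_inv hxidem]
  exact hxidem

lemma idem_comm {e f : S} (he : IsIdem e) (hf : IsIdem f) : e * f = f * e := by
  have hef : e * f * (e * f) = e * f := idem_mul he hf
  have hfe : f * e * (f * e) = f * e := idem_mul hf he
  have : f * e = (e * f)⁻¹ := by
    apply InverseSemigroup.inv_unique
    · -- e * f * (f * e) * (e * f) = e * f
      simp only [mul_assoc]
      rw [idem_cancel hf, show (e : S) * (e * f) = e * f from idem_cancel he f]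
      simpa [mul_assoc] using hef
    · simp only [mul_assoc]
      rw [idem_cancel he, show (f : S) * (f * e) = f * e from idem_cancel hf e]
      simpa [mul_assoc] using hfe
  rw [this, idem_inv (idem_mul he hf)]

lemma my_mul_inv_rev (a b : S) : (a * b)⁻¹ = b⁻¹ * a⁻¹ := by
  symm
  apply InverseSemigroup.inv_unique
  · -- a * b * (b⁻¹ * a⁻¹) * (a * b) = a * b
    have hc := idem_comm (idem_mul_inv b) (idem_inv_mul a)
    calc a * b * (b⁻¹ * a⁻¹) * (a * b) = a * ((b * b⁻¹) * (a⁻¹ * a)) * b := by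
            simp [mul_assoc]
      _ = a * ((a⁻¹ * a) * (b * b⁻¹)) * b := by rw [hc]
      _ = (a * a⁻¹ * a) * (b * b⁻¹ * b) := by simp [mul_assoc]
      _ = a * b := by rw [mim, mim]
  · have hc := idem_comm (idem_inv_mul a) (idem_mul_inv b)
    calc b⁻¹ * a⁻¹ * (a * b) * (b⁻¹ * a⁻¹) = b⁻¹ * ((a⁻¹ * a) * (b * b⁻¹)) * a⁻¹ := by
            simp [mul_assoc]
      _ = b⁻¹ * ((b * b⁻¹) * (a⁻¹ * a)) * a⁻¹ := by rw [hc]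
      _ = (b⁻¹ * b * b⁻¹) * (a⁻¹ * a * a⁻¹) := by simp [mul_assoc]
      _ = b⁻¹ * a⁻¹ := by rw [imi, imi]

lemma conj_idem (a : S) {e : S} (he : IsIdem e) : IsIdem (a * e * a⁻¹) := by
  show _ = _
  have hc := idem_comm he (idem_inv_mul a)
  calc a * e * a⁻¹ * (a * e * a⁻¹) = a * (e * (a⁻¹ * a)) * (e * a⁻¹) := by simp [mul_assoc]
    _ = a * ((a⁻¹ * a) * e) * (e * a⁻¹) := by rw [hc]
    _ = (a * (a⁻¹ * a)) * (e * (e * a⁻¹)) := by simp [mul_assoc]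
    _ = a * (e * a⁻¹) := by rw [mim' a, idem_cancel he]
    _ = a * e * a⁻¹ := by rw [mul_assoc]

lemma conj_le (a : S) {e : S} (he : IsIdem e) : NatLe (a * e * a⁻¹) (a * a⁻¹) :=
  ⟨a * e * a⁻¹, conj_idem a he, by simp only [mul_assoc]; rw [imi' a]⟩

lemma natle_mul_left {e f : S} (he : IsIdem e) (hf : IsIdem f) : NatLe (e * f) e :=
  ⟨f, hf, idem_comm he hf⟩

lemma natle_mul_right {f : S} (he : IsIdem e) : NatLe (e * f) f := ⟨e, he, rfl⟩

lemma hom_inv {T : Type*} [InverseSemigroup T] {f : S → T}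
    (hf : ∀ a b, f (a * b) = f a * f b) (a : S) : f a⁻¹ = (f a)⁻¹ := by
  apply InverseSemigroup.inv_unique
  · rw [← hf, ← hf, mim]
  · rw [← hf, ← hf, imi]

end ISLemmas

/-- An `S`-module structure `(α, λ)` on a semilattice of abelian groups `A`
(modelled as a commutative inverse semigroup): `α` is an isomorphism
`E(S) → E(A)` and `lam` is a homomorphism of `S` into endomorphisms of `A`
satisfying `λ_e(a) = α(e)a` and `λ_s(α(e)) = α(s e s⁻¹)`. -/
structure SMod (S A : Type*) [InverseSemigroup S] [InverseSemigroup A] where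
  α : S → A
  lam : S → A → A
  α_idem : ∀ e : S, IsIdem e → IsIdem (α e)
  α_mul : ∀ e f : S, IsIdem e → IsIdem f → α (e * f) = α e * α f
  α_inj : ∀ e f : S, IsIdem e → IsIdem f → α e = α f → e = f
  α_surj : ∀ g : A, IsIdem g → ∃ e : S, IsIdem e ∧ α e = g
  lam_mul : ∀ (s : S) (a b : A), lam s (a * b) = lam s a * lam s b
  lam_idem : ∀ e : S, IsIdem e → ∀ a : A, lam e a = α e * a
  lam_alpha : ∀ (s e : S), IsIdem e → lam s (α e) = α (s * e * s⁻¹)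
  lam_comp : ∀ (s t : S) (a : A), lam s (lam t a) = lam (s * t) a

/-- Let `A → U → S` (maps `i`, `j`) be a split extension of the `S`-module `A`
by an inverse semigroup `S`, with splitting `k` inducing the module structure
`(α,λ)` (i.e. `i(α(e)) = k(e)` and `i(λ_s(a)) = k(s) i(a) k(s)⁻¹`).  Then for
every order-preserving `h : E(S) → A` with `h(e) ∈ A_{α(e)}`, the map
`k'(s) = i(h(ss⁻¹)) k(s) i(h(s⁻¹s))⁻¹` is again a splitting of `U`. -/
theorem stmt16 {S A U : Type*} [InverseSemigroup S] [InverseSemigroup A]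
    [InverseSemigroup U]
    (hA : ∀ a b : A, a * b = b * a) (M : SMod S A)
    (i : A → U) (j : U → S)
    (hi_mul : ∀ a b : A, i (a * b) = i a * i b)
    (hi_inj : Function.Injective i)
    (hj_mul : ∀ u v : U, j (u * v) = j u * j v)
    (hj_surj : Function.Surjective j)
    (hj_idemsep : ∀ u v : U, IsIdem u → IsIdem v → j u = j v → u = v)
    (hker : ∀ u : U, (∃ a : A, i a = u) ↔ IsIdem (j u))
    (k : S → U)
    (hkj : ∀ s : S, j (k s) = s)
    (hke : ∀ e : S, IsIdem e → IsIdem (k e))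
    (hkhom : ∀ s t : S, k (s * t) = k s * k t)
    (hαk : ∀ e : S, IsIdem e → i (M.α e) = k e)
    (hlamk : ∀ (s : S) (a : A), i (M.lam s a) = k s * i a * (k s)⁻¹)
    (h : S → A)
    (hh_mem : ∀ e : S, IsIdem e → h e * (h e)⁻¹ = M.α e)
    (hh_ord : ∀ e e' : S, IsIdem e → IsIdem e' → NatLe e e' → NatLe (h e) (h e')) :
    (∀ s : S, j (i (h (s * s⁻¹)) * k s * (i (h (s⁻¹ * s)))⁻¹) = s) ∧
    (∀ e : S, IsIdem e → IsIdem (i (h (e * e⁻¹)) * k e * (i (h (e⁻¹ * e)))⁻¹)) ∧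
    (∀ s t : S,
      i (h ((s * t) * (s * t)⁻¹)) * k (s * t) * (i (h ((s * t)⁻¹ * (s * t))))⁻¹
        = (i (h (s * s⁻¹)) * k s * (i (h (s⁻¹ * s)))⁻¹) *
          (i (h (t * t⁻¹)) * k t * (i (h (t⁻¹ * t)))⁻¹)) := by
  -- derived homomorphism facts
  have hA' : ∀ a b c : A, a * (b * c) = b * (a * c) := fun a b c => by
    rw [← mul_assoc, hA a b, mul_assoc]
  have iinv : ∀ a : A, i a⁻¹ = (i a)⁻¹ := hom_inv hi_mul
  have jinv : ∀ u : U, j u⁻¹ = (j u)⁻¹ := hom_inv hj_mul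
  have kinv : ∀ s : S, k s⁻¹ = (k s)⁻¹ := hom_inv hkhom
  have laminv : ∀ (s : S) (a : A), M.lam s a⁻¹ = (M.lam s a)⁻¹ :=
    fun s => hom_inv (M.lam_mul s)
  have hmem' : ∀ e : S, IsIdem e → (h e)⁻¹ * h e = M.α e := by
    intro e he; rw [hA]; exact hh_mem e he
  have habs : ∀ e : S, IsIdem e → M.α e * h e = h e := by
    intro e he; rw [← hh_mem e he]; exact mim (h e)
  have habs2 : ∀ e : S, IsIdem e → (h e)⁻¹ * M.α e = (h e)⁻¹ := by
    intro e he; rw [← hh_mem e he, ← mul_assoc]; exact imi (h e)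
  have habs3 : ∀ e : S, IsIdem e → M.α e * (h e)⁻¹ = (h e)⁻¹ := by
    intro e he; rw [hA]; exact habs2 e he
  have hord' : ∀ e f : S, IsIdem e → IsIdem f → NatLe e f → h e = M.α e * h f := by
    intro e f he hf hle
    obtain ⟨ε, hε, hx⟩ := hh_ord e f he hf hle
    have h1 : M.α e = ε * (h f * (h f)⁻¹) := by
      rw [← hh_mem e he, hx, my_mul_inv_rev, idem_inv hε]
      rw [hA ((h f)⁻¹) ε, mul_assoc, hA' (h f) ε, idem_cancel hε]
    rw [h1, hx]
    symm
    calc ε * (h f * (h f)⁻¹) * h f = ε * (h f * (h f)⁻¹ * h f) := by rw [mul_assoc]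
      _ = ε * h f := by rw [mim]
  have jih : ∀ e : S, IsIdem e → j (i (h e)) = e := by
    intro e he
    have hidem : IsIdem (j (i (h e))) := (hker (i (h e))).mp ⟨_, rfl⟩
    have hidem' : j (i (h e)) * j (i (h e)) = j (i (h e)) := hidem
    have h3 : j (i (h e)) * (j (i (h e)))⁻¹ = e := by
      rw [← jinv, ← hj_mul, ← iinv, ← hi_mul, hh_mem e he, hαk e he, hkj]
    rw [idem_inv hidem, hidem'] at h3
    exact h3
  have move : ∀ (w : S) (b : A), b * M.α (w⁻¹ * w) = b →
      k w * i b = i (M.lam w b) * k w := by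
    intro w b hb
    have h1 : (k w)⁻¹ * k w = i (M.α (w⁻¹ * w)) := by
      rw [← kinv, ← hkhom, hαk _ (idem_inv_mul w)]
    rw [hlamk, mul_assoc (k w * i b), h1, mul_assoc, ← hi_mul, hb]
  refine ⟨?_, ?_, ?_⟩
  · -- j ∘ k' = id
    intro s
    rw [hj_mul, hj_mul, jinv, jih _ (idem_mul_inv s), hkj, jih _ (idem_inv_mul s),
      idem_inv (idem_inv_mul s)]
    simp only [mul_assoc]
    rw [mim' s, mim' s]
  · -- k' maps idempotents to idempotents
    intro e he
    have he' : e * e = e := he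
    have hinv : (e : S)⁻¹ = e := idem_inv he
    rw [hinv, he']
    have : i (h e) * k e * (i (h e))⁻¹ = k e := by
      rw [← hαk e he, ← iinv, ← hi_mul, ← hi_mul]
      congr 1
      calc h e * M.α e * (h e)⁻¹ = h e * (h e)⁻¹ := by
            rw [mul_assoc, habs3 e he]
        _ = M.α e := hh_mem e he
    rw [this]
    exact hke e he
  · -- homomorphism property
    intro s t
    have hfI : IsIdem (t * t⁻¹) := idem_mul_inv t
    have heI : IsIdem (s⁻¹ * s) := idem_inv_mul s
    have he'I : IsIdem (s * s⁻¹) := idem_mul_inv s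
    have hrtI : IsIdem (t⁻¹ * t) := idem_inv_mul t
    have hRI : IsIdem ((s*t)⁻¹ * (s*t)) := idem_inv_mul (s*t)
    have hDI : IsIdem ((s*t) * (s*t)⁻¹) := idem_mul_inv (s*t)
    have hefI : IsIdem ((s⁻¹*s) * (t*t⁻¹)) := idem_mul heI hfI
    have move' : ∀ (w : S) (b : A), b * M.α (w⁻¹ * w) = b →
        ∀ z : U, k w * (i b * z) = i (M.lam w b) * (k w * z) := by
      intro w b hb z
      rw [← mul_assoc, move w b hb, mul_assoc]
    have hi_mul' : ∀ (a b : A) (z : U), i a * (i b * z) = i (a * b) * z := by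
      intro a b z
      rw [hi_mul, mul_assoc]
    have hRform : (s*t)⁻¹ * (s*t) = t⁻¹ * (s⁻¹*s) * t := by
      rw [my_mul_inv_rev]; simp [mul_assoc]
    have hDform : (s*t) * (s*t)⁻¹ = s * (t*t⁻¹) * s⁻¹ := by
      rw [my_mul_inv_rev]; simp [mul_assoc]
    have hRle : NatLe ((s*t)⁻¹ * (s*t)) (t⁻¹ * t) := by
      have hc := conj_le t⁻¹ heI
      rw [my_inv_inv] at hc
      rw [hRform]; exact hc
    have hDle : NatLe ((s*t) * (s*t)⁻¹) (s * s⁻¹) := by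
      have hc := conj_le s hfI
      rw [hDform]; exact hc
    have hsfD : M.lam s (M.α (t*t⁻¹)) = M.α ((s*t)*(s*t)⁻¹) := by
      rw [M.lam_alpha s _ hfI, hDform]
    have hsefD : M.lam s (M.α ((s⁻¹*s)*(t*t⁻¹))) = M.α ((s*t)*(s*t)⁻¹) := by
      rw [M.lam_alpha s _ hefI, hDform]
      congr 2
      rw [← mul_assoc, mim' s]
    have habsR : (h ((s*t)⁻¹*(s*t)))⁻¹ * M.α ((s*t)⁻¹ * (s*t)) = (h ((s*t)⁻¹*(s*t)))⁻¹ :=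
      habs2 _ hRI
    have hhR : h ((s*t)⁻¹*(s*t)) = M.α ((s*t)⁻¹*(s*t)) * h (t⁻¹*t) :=
      hord' _ _ hRI hrtI hRle
    have L : i (h ((s*t)*(s*t)⁻¹)) * k (s*t) * (i (h ((s*t)⁻¹*(s*t))))⁻¹
        = i (h ((s*t)*(s*t)⁻¹) * M.lam (s*t) ((h ((s*t)⁻¹*(s*t)))⁻¹)) * k (s*t) := by
      rw [mul_assoc, ← iinv, move (s*t) _ habsR, ← mul_assoc, ← hi_mul]
    have hcabs : ((h (s⁻¹*s))⁻¹ * h (t*t⁻¹)) * M.α (s⁻¹ * s) = (h (s⁻¹*s))⁻¹ * h (t*t⁻¹) := by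
      rw [mul_assoc, hA (h (t*t⁻¹)), ← mul_assoc, habs2 _ heI]
    have kabs : k (s*t) * i ((h (t⁻¹*t))⁻¹) = k (s*t) * i ((h ((s*t)⁻¹*(s*t)))⁻¹) := by
      have h9 : k (s*t) * i (M.α ((s*t)⁻¹*(s*t))) = k (s*t) := by
        rw [hαk _ hRI, ← hkhom, mim']
      have h10 : M.α ((s*t)⁻¹*(s*t)) * (h (t⁻¹*t))⁻¹ = (h ((s*t)⁻¹*(s*t)))⁻¹ := by
        rw [hhR, my_mul_inv_rev (M.α ((s*t)⁻¹*(s*t))) (h (t⁻¹*t)), idem_inv (M.α_idem _ hRI)]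
        exact hA _ _
      conv_lhs => rw [← h9, mul_assoc, ← hi_mul, h10]
    have Rw : (i (h (s*s⁻¹)) * k s * (i (h (s⁻¹*s)))⁻¹) *
          (i (h (t*t⁻¹)) * k t * (i (h (t⁻¹*t)))⁻¹)
        = i ((h (s*s⁻¹) * M.lam s ((h (s⁻¹*s))⁻¹ * h (t*t⁻¹))) *
            M.lam (s*t) ((h ((s*t)⁻¹*(s*t)))⁻¹)) * k (s*t) := by
      rw [← iinv, ← iinv]
      simp only [mul_assoc]
      rw [hi_mul', move' s _ hcabs, hi_mul', ← mul_assoc (k s) (k t), ← hkhom,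
        kabs, move (s*t) _ habsR, ← mul_assoc, ← hi_mul]
      rw [mul_assoc (h (s*s⁻¹))]
    -- the key identity in A
    have lamc : M.lam s ((h (s⁻¹*s))⁻¹ * h (t*t⁻¹))
        = (M.lam s (h (s⁻¹*s)))⁻¹ * M.lam s (h (t*t⁻¹)) := by
      rw [M.lam_mul, laminv]
    have aux1 : M.α ((s*t)*(s*t)⁻¹) * M.lam s (h (t*t⁻¹)) = M.lam s (h (t*t⁻¹)) := by
      rw [← hsfD, ← M.lam_mul, habs _ hfI]
    have hhef_e : h ((s⁻¹*s)*(t*t⁻¹)) = M.α ((s⁻¹*s)*(t*t⁻¹)) * h (s⁻¹*s) :=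
      hord' _ _ hefI heI (natle_mul_left heI hfI)
    have hhef_f : h ((s⁻¹*s)*(t*t⁻¹)) = M.α ((s⁻¹*s)*(t*t⁻¹)) * h (t*t⁻¹) :=
      hord' _ _ hefI hfI (natle_mul_right heI)
    have aux2 : M.α ((s*t)*(s*t)⁻¹) * M.lam s (h (s⁻¹*s)) = M.lam s (h ((s⁻¹*s)*(t*t⁻¹))) := by
      rw [← hsfD, ← M.lam_mul, hhef_e]
      congr 1
      rw [M.α_mul _ _ heI hfI, hA (M.α (s⁻¹*s)), mul_assoc, habs _ heI]
    have aux2' : (M.lam s (h (s⁻¹*s)))⁻¹ * M.α ((s*t)*(s*t)⁻¹)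
        = (M.lam s (h ((s⁻¹*s)*(t*t⁻¹))))⁻¹ := by
      rw [← aux2, my_mul_inv_rev (M.α (s*t*(s*t)⁻¹)) (M.lam s (h (s⁻¹*s))), idem_inv (M.α_idem _ hDI)]
    have lamhef : M.lam s (h ((s⁻¹*s)*(t*t⁻¹))) = M.lam s (h (t*t⁻¹)) := by
      rw [hhef_f, M.lam_mul, hsefD, aux1]
    have aux3 : (M.lam s (h ((s⁻¹*s)*(t*t⁻¹))))⁻¹ * M.lam s (h (t*t⁻¹))
        = M.α ((s*t)*(s*t)⁻¹) := by
      rw [lamhef, hA, ← laminv, ← M.lam_mul, hh_mem _ hfI, hsfD]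
    have aux4 : h ((s*t)*(s*t)⁻¹) = M.α ((s*t)*(s*t)⁻¹) * h (s*s⁻¹) :=
      hord' _ _ hDI he'I hDle
    have key : (h (s*s⁻¹) * M.lam s ((h (s⁻¹*s))⁻¹ * h (t*t⁻¹)))
        = h ((s*t)*(s*t)⁻¹) := by
      calc h (s*s⁻¹) * M.lam s ((h (s⁻¹*s))⁻¹ * h (t*t⁻¹))
          = h (s*s⁻¹) * ((M.lam s (h (s⁻¹*s)))⁻¹ * M.lam s (h (t*t⁻¹))) := by rw [lamc]
        _ = h (s*s⁻¹) * ((M.lam s (h (s⁻¹*s)))⁻¹ *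
              (M.α ((s*t)*(s*t)⁻¹) * M.lam s (h (t*t⁻¹)))) := by rw [aux1]
        _ = h (s*s⁻¹) * (((M.lam s (h (s⁻¹*s)))⁻¹ * M.α ((s*t)*(s*t)⁻¹)) *
              M.lam s (h (t*t⁻¹))) := by
              rw [← mul_assoc ((M.lam s (h (s⁻¹*s)))⁻¹)]
        _ = h (s*s⁻¹) * ((M.lam s (h ((s⁻¹*s)*(t*t⁻¹))))⁻¹ * M.lam s (h (t*t⁻¹))) := by
              rw [aux2']
        _ = h (s*s⁻¹) * M.α ((s*t)*(s*t)⁻¹) := by rw [aux3]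
        _ = M.α ((s*t)*(s*t)⁻¹) * h (s*s⁻¹) := hA _ _
        _ = h ((s*t)*(s*t)⁻¹) := (aux4).symm
    rw [L, Rw, key]
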